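/- arXiv:2401.09017 — 4 statements merged into one kernel-verified Lean document; each statement's English description precedes it below -/
import Mathlib

section
/- Let n ≥ 3 be an integer, let (ξ, η) ∈ ℝ × ℝ^{n-1} with (ξ, η) ≠ (0, 0), and let ε > 0. Suppose v₀ ∈ ℝ and v' ∈ ℝ^{n-1} are such that for every S ∈ ℝ with |S| < ε and every Y ∈ ℝ^{n-1} with |Y| = 1 and ξ·S + ⟨η, Y⟩ = 0, the two equations v₀ − S·⟨Y, v'⟩ = 0 and −S·v₀·Y + v' + (S² − 1)·⟨Y, v'⟩·Y = 0 hold. Then v₀ = 0 and v' = 0. -/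
/-!
At `S = 0` the first equation gives `v₀ = 0`, and then the second one reads
`v' = (1 - S²) ⟪Y, v'⟫ Y`. Pairing with the unit vector `Y` gives `S² ⟪Y, v'⟫ = 0`, so `v' = 0`
as soon as some admissible `(S, Y)` has `S ≠ 0` or `Y ⟂ v'`. If `η ≠ 0`, the unit vectors of a
space of dimension at least two realise every value of `⟪η, Y⟫` in `[-‖η‖, ‖η‖]`, so small
`S ≠ 0` are admissible; if `η = 0`, then `S = 0` together with any unit `Y ⟂ v'` is admissible.
-/
open scoped RealInnerProductSpace
open Module Filter Topology

section

variable {E : Type*} [NormedAddCommGroup E] [InnerProductSpace ℝ E]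

theorem exists_norm_eq_one_inner_eq_zero [FiniteDimensional ℝ E] (hE : 1 < finrank ℝ E) (η : E) :
    ∃ f : E, ‖f‖ = 1 ∧ ⟪η, f⟫ = 0 := by
  have hker : LinearMap.ker (innerₛₗ ℝ η) ≠ ⊥ :=
    LinearMap.ker_ne_bot_of_finrank_lt (by rwa [finrank_self])
  obtain ⟨x, hx, hx0⟩ := Submodule.exists_mem_ne_zero_of_ne_bot hker
  refine ⟨(‖x‖⁻¹ : ℝ) • x, norm_smul_inv_norm hx0, ?_⟩
  rw [inner_smul_right, show ⟪η, x⟫ = 0 from hx, mul_zero]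

theorem exists_norm_eq_one_inner_eq [FiniteDimensional ℝ E] (hE : 1 < finrank ℝ E) (η : E)
    {c : ℝ} (hc : |c| ≤ ‖η‖) : ∃ Y : E, ‖Y‖ = 1 ∧ ⟪η, Y⟫ = c := by
  obtain ⟨f, hf, hηf⟩ := exists_norm_eq_one_inner_eq_zero hE η
  rcases eq_or_ne η 0 with rfl | hη
  · exact ⟨f, hf, by simpa [eq_comm] using hc⟩
  have hη' : 0 < ‖η‖ := norm_pos_iff.mpr hη
  obtain ⟨e, he, hηe, hef⟩ : ∃ e : E, ‖e‖ = 1 ∧ ⟪η, e⟫ = ‖η‖ ∧ ⟪e, f⟫ = 0 := by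
    refine ⟨(‖η‖⁻¹ : ℝ) • η, norm_smul_inv_norm hη, ?_, ?_⟩
    · rw [inner_smul_right, real_inner_self_eq_norm_sq]; field_simp
    · rw [inner_smul_left, hηf, mul_zero]
  have ht : (c / ‖η‖) ^ 2 ≤ 1 := by
    rw [div_pow, div_le_one (by positivity), ← sq_abs]
    exact pow_le_pow_left₀ (abs_nonneg c) hc 2
  refine ⟨(c / ‖η‖) • e + √(1 - (c / ‖η‖) ^ 2) • f, ?_, ?_⟩
  · refine (pow_eq_one_iff_of_nonneg (norm_nonneg _) two_ne_zero).1 ?_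
    rw [norm_add_sq_real, inner_smul_left, inner_smul_right, hef, norm_smul, norm_smul, he, hf,
      Real.norm_eq_abs, Real.norm_of_nonneg (Real.sqrt_nonneg _)]
    simp only [mul_zero, mul_one, add_zero, sq_abs, Real.sq_sqrt (sub_nonneg.mpr ht)]
    ring
  · rw [inner_add_right, inner_smul_right, inner_smul_right, hηe, hηf]
    field_simp
    ring

theorem inner_eq_zero_of_add_smul_eq_zero {Y v : E} {S : ℝ} (hY : ‖Y‖ = 1) (hS : S ≠ 0)
    (h : v + ((S ^ 2 - 1) * ⟪Y, v⟫) • Y = 0) : ⟪Y, v⟫ = 0 := by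
  have hinner := congrArg (⟪Y, ·⟫) h
  simp only [inner_add_right, inner_smul_right, real_inner_self_eq_norm_sq, hY, inner_zero_right]
    at hinner
  have : S ^ 2 * ⟪Y, v⟫ = 0 := by linarith
  simpa [hS] using this

theorem exists_pos_lt_abs_mul_le {ε a b : ℝ} (hε : 0 < ε) (hb : 0 < b) :
    ∃ S, 0 < S ∧ S < ε ∧ |a * S| ≤ b := by
  have hsmall : ∀ᶠ S in 𝓝 (0 : ℝ), S < ε ∧ |a * S| < b :=
    (eventually_lt_nhds hε).and <|
      (continuous_const.mul continuous_id).abs.tendsto' 0 0 (by simp) |>.eventually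
        (eventually_lt_nhds hb)
  obtain ⟨S, ⟨hSε, hSb⟩, hS⟩ :=
    ((hsmall.filter_mono nhdsWithin_le_nhds).and self_mem_nhdsWithin :
      ∀ᶠ S in 𝓝[>] (0 : ℝ), _).exists
  exact ⟨S, hS, hSε, hSb.le⟩

theorem symbol_kernel_eq_zero [FiniteDimensional ℝ E] (hE : 1 < finrank ℝ E)
    {ξ : ℝ} {η : E} {ε : ℝ} (hε : 0 < ε) {v₀ : ℝ} {v' : E}
    (h : ∀ S : ℝ, |S| < ε → ∀ Y : E, ‖Y‖ = 1 → ξ * S + ⟪η, Y⟫ = 0 →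
      v₀ - S * ⟪Y, v'⟫ = 0 ∧ (-(S * v₀)) • Y + v' + ((S ^ 2 - 1) * ⟪Y, v'⟫) • Y = 0) :
    v₀ = 0 ∧ v' = 0 := by
  have hε0 : |(0 : ℝ)| < ε := by rwa [abs_zero]
  obtain ⟨Y₀, hY₀, hηY₀⟩ := exists_norm_eq_one_inner_eq_zero hE η
  have hv₀ : v₀ = 0 := by simpa using (h 0 hε0 Y₀ hY₀ (by simp [hηY₀])).1
  obtain ⟨S, hS, Y, hY, hSY, hYv'⟩ :
      ∃ S, |S| < ε ∧ ∃ Y : E, ‖Y‖ = 1 ∧ ξ * S + ⟪η, Y⟫ = 0 ∧ ⟪Y, v'⟫ = 0 := by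
    rcases eq_or_ne η 0 with rfl | hη
    · obtain ⟨Y, hY, hv'Y⟩ := exists_norm_eq_one_inner_eq_zero hE v'
      exact ⟨0, hε0, Y, hY, by simp, by rw [real_inner_comm, hv'Y]⟩
    obtain ⟨S, hS0, hSε, hξS⟩ := exists_pos_lt_abs_mul_le hε (norm_pos_iff.mpr hη) (a := ξ)
    obtain ⟨Y, hY, hηY⟩ := exists_norm_eq_one_inner_eq hE η (c := -(ξ * S)) (by rwa [abs_neg])
    have hSε' : |S| < ε := by rwa [abs_of_pos hS0]
    have hSY : ξ * S + ⟪η, Y⟫ = 0 := by rw [hηY, add_neg_cancel]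
    have hsymbol := (h S hSε' Y hY hSY).2
    rw [hv₀, mul_zero, neg_zero, zero_smul, zero_add] at hsymbol
    exact ⟨S, hSε', Y, hY, hSY, inner_eq_zero_of_add_smul_eq_zero hY hS0.ne' hsymbol⟩
  refine ⟨hv₀, ?_⟩
  simpa [hv₀, hYv'] using (h S hS Y hY hSY).2

end

theorem stmt_0_general (n : ℕ) (hn : 3 ≤ n)
    (ξ : ℝ) (η : EuclideanSpace ℝ (Fin (n - 1)))
    (ε : ℝ) (hε : 0 < ε)
    (v₀ : ℝ) (v' : EuclideanSpace ℝ (Fin (n - 1)))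
    (h : ∀ S : ℝ, |S| < ε → ∀ Y : EuclideanSpace ℝ (Fin (n - 1)), ‖Y‖ = 1 →
      ξ * S + ⟪η, Y⟫ = 0 →
      v₀ - S * ⟪Y, v'⟫ = 0 ∧
      (-(S * v₀)) • Y + v' + ((S ^ 2 - 1) * ⟪Y, v'⟫) • Y = 0) :
    v₀ = 0 ∧ v' = 0 :=
  symbol_kernel_eq_zero (by rw [finrank_euclideanSpace_fin]; omega) hε h

theorem stmt_0 (n : ℕ) (hn : 3 ≤ n)
    (ξ : ℝ) (η : EuclideanSpace ℝ (Fin (n - 1)))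
    (hξη : ¬(ξ = 0 ∧ η = 0))
    (ε : ℝ) (hε : 0 < ε)
    (v₀ : ℝ) (v' : EuclideanSpace ℝ (Fin (n - 1)))
    (h : ∀ S : ℝ, |S| < ε → ∀ Y : EuclideanSpace ℝ (Fin (n - 1)), ‖Y‖ = 1 →
      ξ * S + ⟪η, Y⟫ = 0 →
      v₀ - S * ⟪Y, v'⟫ = 0 ∧
      (-(S * v₀)) • Y + v' + ((S ^ 2 - 1) * ⟪Y, v'⟫) • Y = 0) :
    v₀ = 0 ∧ v' = 0 :=
  stmt_0_general n hn ξ η ε hε v₀ v' h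
end

section
/- Let n ≥ 3 be an integer, ξ ∈ ℝ, and η ∈ ℝ^{n-1}. Suppose v_x ∈ ℂ and v_y ∈ ℂ^{n-1} satisfy, for every Y ∈ ℝ^{n-1} with |Y| = 1, the two equations v_x + (ξ − i)·(⟨Y, η⟩/(ξ² + 1))·⟨Y, v_y⟩ = 0 and (ξ + i)·(⟨Y, η⟩/(ξ² + 1))·v_x·Y + v_y + ((⟨Y, η⟩²/(ξ² + 1)) − 1)·⟨Y, v_y⟩·Y = 0, where Y is regarded as a vector in ℂ^{n-1}. Then v_x = 0 and v_y = 0. -/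
open scoped RealInnerProductSpace
open Complex

/-- The pairing `⟨Y, v⟩ = ∑ j, Y j * v j` of a real vector `Y` with a complex vector `v`. -/
noncomputable def cpair {m : ℕ} (Y : EuclideanSpace ℝ (Fin m))
    (v : EuclideanSpace ℂ (Fin m)) : ℂ :=
  ∑ j, (Y j : ℂ) * v j

/-- A real vector regarded as a complex vector. -/
noncomputable def toC {m : ℕ} (Y : EuclideanSpace ℝ (Fin m)) :
    EuclideanSpace ℂ (Fin m) :=
  WithLp.toLp 2 (fun j => (Y j : ℂ))

/-! Eliminating `v_x` with the first equation, the second one says `v_y = ⟨Y, v_y⟩ Y` for every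
unit vector `Y`. Since `n - 1 ≥ 2`, taking two orthogonal coordinate directions forces `v_y = 0`,
and then the first equation gives `v_x = 0`. -/

@[simp]
lemma toC_apply {m : ℕ} (Y : EuclideanSpace ℝ (Fin m)) (j : Fin m) : toC Y j = (Y j : ℂ) := rfl

@[simp]
lemma cpair_zero_right {m : ℕ} (Y : EuclideanSpace ℝ (Fin m)) : cpair Y 0 = 0 := by
  simp [cpair]

@[simp]
lemma cpair_single_one_left {m : ℕ} (i : Fin m) (v : EuclideanSpace ℂ (Fin m)) :
    cpair (EuclideanSpace.single i 1) v = v i := by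
  simp [cpair, apply_ite]

lemma eq_cpair_smul_toC_of_symbol_eq_zero {m : ℕ} (ξ a : ℝ) (Y : EuclideanSpace ℝ (Fin m))
    (v_x : ℂ) (v_y : EuclideanSpace ℂ (Fin m))
    (h₁ : v_x + ((ξ : ℂ) - I) * ((a / (ξ ^ 2 + 1) : ℝ) : ℂ) * cpair Y v_y = 0)
    (h₂ : (((ξ : ℂ) + I) * ((a / (ξ ^ 2 + 1) : ℝ) : ℂ) * v_x) • toC Y + v_y
        + ((((a ^ 2 / (ξ ^ 2 + 1) : ℝ) : ℂ) - 1) * cpair Y v_y) • toC Y = 0) :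
    v_y = cpair Y v_y • toC Y := by
  have hs : (ξ ^ 2 + 1 : ℂ) ≠ 0 := by exact_mod_cast (by positivity : ξ ^ 2 + 1 ≠ 0)
  -- once `v_x` is eliminated, `(ξ + i)(ξ - i) = ξ² + 1` makes this coefficient `-1`
  have hcoeff : ((ξ : ℂ) + I) * ((a / (ξ ^ 2 + 1) : ℝ) : ℂ) * v_x
      + ((((a ^ 2 / (ξ ^ 2 + 1) : ℝ) : ℂ) - 1) * cpair Y v_y) = -cpair Y v_y := by
    have hvx : v_x = -(((ξ : ℂ) - I) * ((a / (ξ ^ 2 + 1) : ℝ) : ℂ) * cpair Y v_y) := by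
      linear_combination h₁
    rw [hvx]
    push_cast
    field_simp
    linear_combination (a ^ 2 * cpair Y v_y) * I_sq
  ext j
  have h₂j := congrArg (fun v => v j) h₂
  simp only [PiLp.add_apply, PiLp.smul_apply, PiLp.zero_apply, toC_apply, smul_eq_mul] at h₂j
  simp only [PiLp.smul_apply, toC_apply, smul_eq_mul]
  linear_combination h₂j - (Y j : ℂ) * hcoeff

lemma eq_zero_of_forall_norm_eq_one_eq_cpair_smul_toC {m : ℕ} (hm : 2 ≤ m)
    (v : EuclideanSpace ℂ (Fin m))
    (h : ∀ Y : EuclideanSpace ℝ (Fin m), ‖Y‖ = 1 → v = cpair Y v • toC Y) : v = 0 := by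
  let i₀ : Fin m := ⟨0, by omega⟩
  let i₁ : Fin m := ⟨1, by omega⟩
  have hunit : ∀ i : Fin m, ‖EuclideanSpace.single i (1 : ℝ)‖ = 1 := by simp
  have hv₀ : v i₀ = 0 := by
    have := congrArg (fun w => w i₀) (h _ (hunit i₁))
    simpa [PiLp.single_apply, i₀, i₁] using this
  have := h _ (hunit i₀)
  rw [cpair_single_one_left, hv₀, zero_smul] at this
  exact this

theorem stmt_2 (n : ℕ) (hn : 3 ≤ n)
    (ξ : ℝ) (η : EuclideanSpace ℝ (Fin (n - 1)))
    (v_x : ℂ) (v_y : EuclideanSpace ℂ (Fin (n - 1)))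
    (h : ∀ Y : EuclideanSpace ℝ (Fin (n - 1)), ‖Y‖ = 1 →
      v_x + ((ξ : ℂ) - I) * ((⟪Y, η⟫ / (ξ ^ 2 + 1) : ℝ) : ℂ) * cpair Y v_y = 0 ∧
      (((ξ : ℂ) + I) * ((⟪Y, η⟫ / (ξ ^ 2 + 1) : ℝ) : ℂ) * v_x) • toC Y + v_y
        + ((((⟪Y, η⟫ ^ 2 / (ξ ^ 2 + 1) : ℝ) : ℂ) - 1) * cpair Y v_y) • toC Y = 0) :
    v_x = 0 ∧ v_y = 0 := by
  have hv_y : v_y = 0 :=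
    eq_zero_of_forall_norm_eq_one_eq_cpair_smul_toC (by omega) v_y fun Y hY =>
      eq_cpair_smul_toC_of_symbol_eq_zero ξ _ Y v_x v_y (h Y hY).1 (h Y hY).2
  let Y₀ : EuclideanSpace ℝ (Fin (n - 1)) := EuclideanSpace.single ⟨0, by omega⟩ 1
  have h₁ := (h Y₀ (by simp [Y₀])).1
  rw [hv_y, cpair_zero_right, mul_zero, add_zero] at h₁
  exact ⟨h₁, hv_y⟩
end

section
/- Let n ≥ 2 be an integer, ξ ∈ ℝ, η ∈ ℝ^{n-1}, and Y ∈ ℝ^{n-1} with |Y| = 1; set c = ⟨Y, η⟩/(ξ² + 1). Then for all v_x ∈ ℂ and v_y ∈ ℂ^{n-1}: |v_x|² + 2·Re((ξ − i)·c·conj(v_x)·⟨Y, v_y⟩) + |v_y|² + (c²·(ξ² + 1) − 1)·|⟨Y, v_y⟩|² ≥ 0. Equivalently, the Hermitian block matrix [[1, (ξ − i)·c·Yᵀ], [(ξ + i)·c·Y, Id + (c²·(ξ² + 1) − 1)·Y·Yᵀ]] acting on ℂ × ℂ^{n-1} is positive semidefinite. -/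
open scoped RealInnerProductSpace ComplexConjugate
open Complex

/-! The quadratic form equals `|v_x + (ξ - i) c ⟨Y, v_y⟩|² + (|v_y|² - |⟨Y, v_y⟩|²)`, a sum of two
nonnegative terms: the second by Cauchy–Schwarz, since `|Y| = 1`. -/

section cpair

variable {m : ℕ}

noncomputable def EuclideanSpace.complexify (Y : EuclideanSpace ℝ (Fin m)) :
    EuclideanSpace ℂ (Fin m) :=
  WithLp.toLp 2 fun j => (Y j : ℂ)

theorem EuclideanSpace.norm_complexify (Y : EuclideanSpace ℝ (Fin m)) : ‖Y.complexify‖ = ‖Y‖ := by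
  simp [EuclideanSpace.norm_eq, EuclideanSpace.complexify]

theorem cpair_eq_inner (Y : EuclideanSpace ℝ (Fin m)) (v : EuclideanSpace ℂ (Fin m)) :
    cpair Y v = inner ℂ Y.complexify v := by
  simp [cpair, PiLp.inner_apply, EuclideanSpace.complexify, mul_comm]

theorem norm_cpair_le (Y : EuclideanSpace ℝ (Fin m)) (v : EuclideanSpace ℂ (Fin m)) :
    ‖cpair Y v‖ ≤ ‖Y‖ * ‖v‖ := by
  rw [cpair_eq_inner, ← EuclideanSpace.norm_complexify]
  exact norm_inner_le_norm _ _

end cpair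

theorem Complex.sq_norm_add_mul (x w p : ℂ) :
    ‖x + w * p‖ ^ 2 = ‖x‖ ^ 2 + 2 * (w * conj x * p).re + ‖w‖ ^ 2 * ‖p‖ ^ 2 := by
  have hre : (x * conj (w * p)).re = (w * conj x * p).re := by
    rw [← conj_re, map_mul, conj_conj]; ring_nf
  simp only [← normSq_eq_norm_sq, normSq_add, hre, normSq_mul]
  ring

theorem Complex.sq_norm_ofReal_sub_I (ξ : ℝ) : ‖(ξ : ℂ) - I‖ ^ 2 = ξ ^ 2 + 1 := by
  rw [← normSq_eq_norm_sq, normSq_apply]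
  simp only [sub_re, ofReal_re, I_re, sub_zero, sub_im, ofReal_im, I_im, zero_sub, mul_neg, mul_one,
    neg_neg]
  ring

theorem stmt_3_general (n : ℕ)
    (ξ : ℝ)
    (Y : EuclideanSpace ℝ (Fin (n - 1))) (hY : ‖Y‖ = 1)
    (c : ℝ)
    (v_x : ℂ) (v_y : EuclideanSpace ℂ (Fin (n - 1))) :
    0 ≤ ‖v_x‖ ^ 2 + 2 * (((ξ : ℂ) - I) * (c : ℂ) * conj v_x * cpair Y v_y).re
        + ‖v_y‖ ^ 2 + (c ^ 2 * (ξ ^ 2 + 1) - 1) * ‖cpair Y v_y‖ ^ 2 := by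
  have hw : ‖((ξ : ℂ) - I) * c‖ ^ 2 = c ^ 2 * (ξ ^ 2 + 1) := by
    rw [norm_mul, mul_pow, sq_norm_ofReal_sub_I, norm_real, Real.norm_eq_abs, sq_abs, mul_comm]
  have hsq := sq_norm_add_mul v_x (((ξ : ℂ) - I) * c) (cpair Y v_y)
  have hCS : ‖cpair Y v_y‖ ≤ ‖v_y‖ := by simpa [hY] using norm_cpair_le Y v_y
  have hCS_sq : ‖cpair Y v_y‖ ^ 2 ≤ ‖v_y‖ ^ 2 := pow_le_pow_left₀ (norm_nonneg _) hCS 2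
  rw [hw] at hsq
  linarith [sq_nonneg ‖v_x + ((ξ : ℂ) - I) * c * cpair Y v_y‖]

theorem stmt_3 (n : ℕ) (hn : 2 ≤ n)
    (ξ : ℝ) (η : EuclideanSpace ℝ (Fin (n - 1)))
    (Y : EuclideanSpace ℝ (Fin (n - 1))) (hY : ‖Y‖ = 1)
    (c : ℝ) (hc : c = ⟪Y, η⟫ / (ξ ^ 2 + 1))
    (v_x : ℂ) (v_y : EuclideanSpace ℂ (Fin (n - 1))) :
    0 ≤ ‖v_x‖ ^ 2 + 2 * (((ξ : ℂ) - I) * (c : ℂ) * conj v_x * cpair Y v_y).re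
        + ‖v_y‖ ^ 2 + (c ^ 2 * (ξ ^ 2 + 1) - 1) * ‖cpair Y v_y‖ ^ 2 :=
  stmt_3_general n ξ Y hY c v_x v_y
end

section
/- Let τ > 0, c₁ > 0, and let x : [0, τ] → ℝ be differentiable with x(t) > 0 and x'(t) ≤ −c₁ for all t ∈ [0, τ]. Then for every s ∈ [0, τ] and every F > 0: ∫₀^s exp(−2F·(1/x(s) − 1/x(t)))·x(t)^{−2} dt ≤ 1/(2·c₁·F). -/
open Real Set

/-! Since `x' ≤ -c₁`, the derivative of `t ↦ exp (2F / x t)` dominates `2 c₁ F · exp (2F / x t) / x t ²`,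
so the integral is at most `exp (-2F / x s) (exp (2F / x s) - exp (2F / x 0)) / (2 c₁ F) ≤ 1 / (2 c₁ F)`. -/

theorem hasDerivAt_exp_div {x : ℝ → ℝ} {x' t : ℝ} (l : ℝ) (hx : HasDerivAt x x' t)
    (hne : x t ≠ 0) :
    HasDerivAt (fun r => exp (l / x r)) (exp (l / x t) * (-(l * x') / x t ^ 2)) t := by
  convert ((hx.inv hne).const_mul l).exp using 1
  · funext r
    simp only [div_eq_mul_inv, Pi.inv_apply]
  · simp only [div_eq_mul_inv, Pi.inv_apply]
    ring

theorem integral_exp_div_div_sq_le {x : ℝ → ℝ} {a b c l : ℝ} (hab : a ≤ b) (hc : 0 < c)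
    (hl : 0 < l) (hpos : ∀ t ∈ Icc a b, 0 < x t)
    (hdiff : ∀ t ∈ Icc a b, DifferentiableAt ℝ x t) (hderiv : ∀ t ∈ Ioo a b, deriv x t ≤ -c) :
    ∫ t in a..b, exp (l / x t) / x t ^ 2 ≤ (exp (l / x b) - exp (l / x a)) / (c * l) := by
  have hne : ∀ t ∈ Icc a b, x t ≠ 0 := fun t ht => (hpos t ht).ne'
  have hcont : ContinuousOn x (Icc a b) := fun t ht => (hdiff t ht).continuousAt.continuousWithinAt
  have hprim (t) (ht : t ∈ Icc a b) : HasDerivAt (fun r => exp (l / x r) / (c * l))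
      (exp (l / x t) * (-(l * deriv x t) / x t ^ 2) / (c * l)) t :=
    (hasDerivAt_exp_div l (hdiff t ht).hasDerivAt (hne t ht)).div_const _
  simp only [sub_div]
  refine intervalIntegral.integral_le_sub_of_hasDeriv_right_of_le hab
    (fun t ht => (hprim t ht).continuousAt.continuousWithinAt)
    (fun t ht => (hprim t (Ioo_subset_Icc_self ht)).hasDerivWithinAt)
    ((continuousOn_const.div hcont hne).rexp.div (hcont.pow 2)
      fun t ht => pow_ne_zero 2 (hne t ht)).integrableOn_Icc
    fun t ht => ?_
  have hxt := hpos t (Ioo_subset_Icc_self ht)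
  have hslope : 1 ≤ -deriv x t / c := (one_le_div hc).mpr (by linarith [hderiv t ht])
  calc exp (l / x t) / x t ^ 2 ≤ exp (l / x t) / x t ^ 2 * (-deriv x t / c) :=
        le_mul_of_one_le_right (by positivity) hslope
    _ = exp (l / x t) * (-(l * deriv x t) / x t ^ 2) / (c * l) := by
        field_simp

theorem stmt_8_general (τ c₁ : ℝ) (hc₁ : 0 < c₁)
    (x : ℝ → ℝ)
    (hpos : ∀ t ∈ Set.Icc (0 : ℝ) τ, 0 < x t)
    (hdiff : ∀ t ∈ Set.Icc (0 : ℝ) τ, DifferentiableAt ℝ x t)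
    (hderiv : ∀ t ∈ Set.Icc (0 : ℝ) τ, deriv x t ≤ -c₁) :
    ∀ s ∈ Set.Icc (0 : ℝ) τ, ∀ F : ℝ, 0 < F →
      (∫ t in (0 : ℝ)..s, Real.exp (-2 * F * (1 / x s - 1 / x t)) / (x t) ^ 2)
        ≤ 1 / (2 * c₁ * F) := by
  rintro s ⟨hs0, hsτ⟩ F hF
  have hsub : Icc 0 s ⊆ Icc 0 τ := Icc_subset_Icc le_rfl hsτ
  have hsplit (t : ℝ) : exp (-2 * F * (1 / x s - 1 / x t)) / x t ^ 2
      = exp (-(2 * F) / x s) * (exp (2 * F / x t) / x t ^ 2) := by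
    rw [mul_div_assoc', ← exp_add]; ring_nf
  have hbound := integral_exp_div_div_sq_le hs0 hc₁ (by positivity : 0 < 2 * F)
    (fun t ht => hpos t (hsub ht)) (fun t ht => hdiff t (hsub ht))
    (fun t ht => hderiv t (hsub (Ioo_subset_Icc_self ht)))
  simp only [hsplit, intervalIntegral.integral_const_mul]
  calc exp (-(2 * F) / x s) * ∫ t in 0..s, exp (2 * F / x t) / x t ^ 2
      ≤ exp (-(2 * F) / x s) * ((exp (2 * F / x s) - exp (2 * F / x 0)) / (c₁ * (2 * F))) :=
        mul_le_mul_of_nonneg_left hbound (exp_pos _).le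
    _ ≤ exp (-(2 * F) / x s) * (exp (2 * F / x s) / (c₁ * (2 * F))) := by
        gcongr; linarith [exp_pos (2 * F / x 0)]
    _ = 1 / (2 * c₁ * F) := by
        rw [mul_div_assoc', ← exp_add, neg_div, neg_add_cancel, exp_zero]; ring

theorem stmt_8 (τ c₁ : ℝ) (hτ : 0 < τ) (hc₁ : 0 < c₁)
    (x : ℝ → ℝ)
    (hpos : ∀ t ∈ Set.Icc (0 : ℝ) τ, 0 < x t)
    (hdiff : ∀ t ∈ Set.Icc (0 : ℝ) τ, DifferentiableAt ℝ x t)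
    (hderiv : ∀ t ∈ Set.Icc (0 : ℝ) τ, deriv x t ≤ -c₁) :
    ∀ s ∈ Set.Icc (0 : ℝ) τ, ∀ F : ℝ, 0 < F →
      (∫ t in (0 : ℝ)..s, Real.exp (-2 * F * (1 / x s - 1 / x t)) / (x t) ^ 2)
        ≤ 1 / (2 * c₁ * F) :=
  stmt_8_general τ c₁ hc₁ x hpos hdiff hderiv
end
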